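/- In any finite-horizon minimax control system, any strategy g* that at every reachable history (z_{1:t}, u_{0:t−1}) selects an action g*_t(z_{1:t}, u_{0:t−1}) attaining the minimum in min_{u ∈ 𝒰_t} max_{z ∈ Z̃_t(P_t, u)} V_{t+1}(f̃_t(P_t, u, z)), where P_t := P_t(z_{1:t}, u_{0:t−1}) is the information state of the history, satisfies J(g*) = V_0(X₀) and is therefore optimal: J(g*) = min over all strategies g of J(g). -/
import Mathlib


/-- A finite-horizon minimax control system. -/
structure Sys where
  T : ℕ
  X : ℕ → Type
  U : ℕ → Type
  W : ℕ → Type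
  Z : ℕ → Type
  f : ∀ t, X t → U t → W t → X (t+1)
  h : ∀ t, X t → U t → Z (t+1)
  X0 : Set (X 0)
  d : X T → ℝ

namespace Sys

variable (S : Sys)

/-- A strategy assigns to each time `t` and history `(z_{1:t}, u_{0:t-1})` an action. -/
def Strat := ∀ t : ℕ, (∀ ℓ : Fin t, S.Z (ℓ.1+1)) → (∀ ℓ : Fin t, S.U ℓ.1) → S.U t

/-- Closed-loop trajectory: state, observation history and action history. -/
def traj (g : S.Strat) (x0 : S.X 0) (w : ∀ t, S.W t) :
    ∀ t : ℕ, S.X t × (∀ ℓ : Fin t, S.Z (ℓ.1+1)) × (∀ ℓ : Fin t, S.U ℓ.1)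
  | 0 => (x0, fun i => i.elim0, fun i => i.elim0)
  | t+1 =>
    let p := traj g x0 w t
    let u := g t p.2.1 p.2.2
    (S.f t p.1 u (w t),
     Fin.snoc (α := fun ℓ : Fin (t+1) => S.Z (ℓ.1+1)) p.2.1 (S.h t p.1 u),
     Fin.snoc (α := fun ℓ : Fin (t+1) => S.U ℓ.1) p.2.2 u)

/-- Worst-case cost of a strategy. -/
noncomputable def J (g : S.Strat) : ℝ :=
  sSup {r | ∃ x0 ∈ S.X0, ∃ w : ∀ t, S.W t, r = S.d (S.traj g x0 w S.T).1}

/-- Open-loop trajectory for a prefix of action values. -/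
def olp (x0 : S.X 0) (w : ∀ t, S.W t) : ∀ t : ℕ, (∀ ℓ : Fin t, S.U ℓ.1) → S.X t
  | 0, _ => x0
  | t+1, u => S.f t (olp x0 w t (fun ℓ => u ℓ.castSucc)) (u (Fin.last t)) (w t)

/-- The information state `P_t(z_{1:t}, u_{0:t-1})`. -/
def infoState (t : ℕ) (z : ∀ ℓ : Fin t, S.Z (ℓ.1+1)) (u : ∀ ℓ : Fin t, S.U ℓ.1) :
    Set (S.X t) :=
  {x | ∃ x0 ∈ S.X0, ∃ w : ∀ s, S.W s,
    (∀ ℓ : Fin t, S.h ℓ.1 (S.olp x0 w ℓ.1 (fun j => u ⟨j.1, j.2.trans ℓ.2⟩)) (u ℓ) = z ℓ) ∧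
    S.olp x0 w t u = x}

/-- The strategy-independent information-state update map `f̃_t`. -/
def Ftil (t : ℕ) (P : Set (S.X t)) (u : S.U t) (z : S.Z (t+1)) : Set (S.X (t+1)) :=
  {x' | ∃ x ∈ P, S.h t x u = z ∧ ∃ w : S.W t, x' = S.f t x u w}

/-- The feasible-observation set `Z̃_t(P, u)`. -/
def Zfeas (t : ℕ) (P : Set (S.X t)) (u : S.U t) : Set (S.Z (t+1)) :=
  {z | ∃ x ∈ P, S.h t x u = z}

/-- The dynamic-programming value functions. -/
noncomputable def V (t : ℕ) (P : Set (S.X t)) : ℝ :=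
  if h : t = S.T then sSup {r | ∃ x ∈ P, r = S.d (h ▸ x)}
  else if h2 : t < S.T then
    sInf {r | ∃ u : S.U t,
      r = sSup {s | ∃ z ∈ S.Zfeas t P u, s = V (t+1) (S.Ftil t P u z)}}
  else 0
termination_by S.T - t
decreasing_by omega

variable {S : Sys}

lemma traj_succ (g : S.Strat) (x0 : S.X 0) (w : ∀ s, S.W s) (t : ℕ) :
    S.traj g x0 w (t+1) =
      (S.f t (S.traj g x0 w t).1 (g t (S.traj g x0 w t).2.1 (S.traj g x0 w t).2.2) (w t),
       Fin.snoc (α := fun ℓ : Fin (t+1) => S.Z (ℓ.1+1)) (S.traj g x0 w t).2.1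
         (S.h t (S.traj g x0 w t).1 (g t (S.traj g x0 w t).2.1 (S.traj g x0 w t).2.2)),
       Fin.snoc (α := fun ℓ : Fin (t+1) => S.U ℓ.1) (S.traj g x0 w t).2.2
         (g t (S.traj g x0 w t).2.1 (S.traj g x0 w t).2.2)) := rfl

lemma olp_zero (x0 : S.X 0) (w : ∀ s, S.W s) (u : ∀ ℓ : Fin 0, S.U ℓ.1) :
    S.olp x0 w 0 u = x0 := rfl

lemma olp_succ (x0 : S.X 0) (w : ∀ s, S.W s) (t : ℕ) (u : ∀ ℓ : Fin (t+1), S.U ℓ.1) :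
    S.olp x0 w (t+1) u =
      S.f t (S.olp x0 w t (fun ℓ => u ℓ.castSucc)) (u (Fin.last t)) (w t) := rfl

lemma olp_congr (x0 : S.X 0) (w w' : ∀ s, S.W s) :
    ∀ t (u : ∀ ℓ : Fin t, S.U ℓ.1), (∀ s, s < t → w s = w' s) →
      S.olp x0 w t u = S.olp x0 w' t u
  | 0, _, _ => rfl
  | t+1, u, hw => by
    rw [olp_succ, olp_succ, olp_congr x0 w w' t _ (fun s hs => hw s (hs.trans (Nat.lt_succ_self t))),
      hw t (Nat.lt_succ_self t)]
lemma traj_pref (g : S.Strat) (x0 : S.X 0) (w : ∀ s, S.W s) :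
    ∀ t ℓ (h : ℓ ≤ t),
      (∀ j : Fin ℓ, (S.traj g x0 w t).2.2 ⟨j.1, lt_of_lt_of_le j.2 h⟩ = (S.traj g x0 w ℓ).2.2 j) ∧
      (∀ j : Fin ℓ, (S.traj g x0 w t).2.1 ⟨j.1, lt_of_lt_of_le j.2 h⟩ = (S.traj g x0 w ℓ).2.1 j)
  | 0, ℓ, h => by
    have : ℓ = 0 := Nat.le_zero.mp h
    subst this
    exact ⟨fun j => j.elim0, fun j => j.elim0⟩
  | t+1, ℓ, h => by
    rcases Nat.lt_succ_iff_lt_or_eq.mp (Nat.lt_succ_of_le h) with h' | h'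
    · have hle : ℓ ≤ t := Nat.lt_succ_iff.mp h'
      have IH := traj_pref g x0 w t ℓ hle
      constructor <;> intro j
      · have e : (S.traj g x0 w (t+1)).2.2 ⟨j.1, lt_of_lt_of_le j.2 h⟩
            = (S.traj g x0 w t).2.2 ⟨j.1, lt_of_lt_of_le j.2 hle⟩ := by
          rw [traj_succ]
          exact Fin.snoc_castSucc (α := fun ℓ : Fin (t+1) => S.U ℓ.1) _ _
            ⟨j.1, lt_of_lt_of_le j.2 hle⟩
        rw [e]; exact IH.1 j
      · have e : (S.traj g x0 w (t+1)).2.1 ⟨j.1, lt_of_lt_of_le j.2 h⟩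
            = (S.traj g x0 w t).2.1 ⟨j.1, lt_of_lt_of_le j.2 hle⟩ := by
          rw [traj_succ]
          exact Fin.snoc_castSucc (α := fun ℓ : Fin (t+1) => S.Z (ℓ.1+1)) _ _
            ⟨j.1, lt_of_lt_of_le j.2 hle⟩
        rw [e]; exact IH.2 j
    · subst h'
      constructor <;> intro j <;> congr 1
lemma traj_consistent (g : S.Strat) (x0 : S.X 0) (w : ∀ s, S.W s) :
    ∀ t (z : ∀ ℓ : Fin t, S.Z (ℓ.1+1)) (u : ∀ ℓ : Fin t, S.U ℓ.1),
      (∀ ℓ : Fin t, u ℓ = g ℓ.1 (fun j => z ⟨j.1, j.2.trans ℓ.2⟩)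
        (fun j => u ⟨j.1, j.2.trans ℓ.2⟩)) →
      (∀ ℓ : Fin t, S.h ℓ.1 (S.olp x0 w ℓ.1 (fun j => u ⟨j.1, j.2.trans ℓ.2⟩)) (u ℓ) = z ℓ) →
      (S.traj g x0 w t).2.1 = z ∧ (S.traj g x0 w t).2.2 = u ∧
        (S.traj g x0 w t).1 = S.olp x0 w t u
  | 0, z, u, hcons, hobs => by
    refine ⟨funext fun j => j.elim0, funext fun j => j.elim0, rfl⟩
  | t+1, z, u, hcons, hobs => by
    obtain ⟨hz, hu, hx⟩ := traj_consistent g x0 w t (fun ℓ => z ℓ.castSucc)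
      (fun ℓ => u ℓ.castSucc) (fun ℓ => hcons ℓ.castSucc) (fun ℓ => hobs ℓ.castSucc)
    have hcl : g t (S.traj g x0 w t).2.1 (S.traj g x0 w t).2.2 = u (Fin.last t) := by
      rw [hz, hu]; exact (hcons (Fin.last t)).symm
    have hu2 : (S.traj g x0 w (t+1)).2.2 = u := by
      funext ℓ
      refine Fin.lastCases ?_ (fun j => ?_) ℓ
      · have e : (S.traj g x0 w (t+1)).2.2 (Fin.last t)
            = g t (S.traj g x0 w t).2.1 (S.traj g x0 w t).2.2 :=
          Fin.snoc_last (α := fun ℓ : Fin (t+1) => S.U ℓ.1) _ _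
        rw [e, hcl]
      · have e : (S.traj g x0 w (t+1)).2.2 j.castSucc = (S.traj g x0 w t).2.2 j :=
          Fin.snoc_castSucc (α := fun ℓ : Fin (t+1) => S.U ℓ.1) _ _ j
        rw [e, hu]
    have hz2 : (S.traj g x0 w (t+1)).2.1 = z := by
      funext ℓ
      refine Fin.lastCases ?_ (fun j => ?_) ℓ
      · have e : (S.traj g x0 w (t+1)).2.1 (Fin.last t)
            = S.h t (S.traj g x0 w t).1 (g t (S.traj g x0 w t).2.1 (S.traj g x0 w t).2.2) :=
          Fin.snoc_last (α := fun ℓ : Fin (t+1) => S.Z (ℓ.1+1)) _ _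
        rw [e, hcl, hx]
        exact hobs (Fin.last t)
      · have e : (S.traj g x0 w (t+1)).2.1 j.castSucc = (S.traj g x0 w t).2.1 j :=
          Fin.snoc_castSucc (α := fun ℓ : Fin (t+1) => S.Z (ℓ.1+1)) _ _ j
        rw [e, hz]
    have hx2 : (S.traj g x0 w (t+1)).1 = S.olp x0 w (t+1) u := by
      show S.f t (S.traj g x0 w t).1
          (g t (S.traj g x0 w t).2.1 (S.traj g x0 w t).2.2) (w t) = _
      rw [olp_succ, hcl, hx]
    exact ⟨hz2, hu2, hx2⟩
lemma olp_traj (g : S.Strat) (x0 : S.X 0) (w : ∀ s, S.W s) :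
    ∀ t, S.olp x0 w t (S.traj g x0 w t).2.2 = (S.traj g x0 w t).1
  | 0 => rfl
  | t+1 => by
    rw [olp_succ]
    have e1 : (fun ℓ : Fin t => (S.traj g x0 w (t+1)).2.2 ℓ.castSucc)
        = (S.traj g x0 w t).2.2 := by
      funext ℓ
      exact Fin.snoc_castSucc (α := fun ℓ : Fin (t+1) => S.U ℓ.1) _ _ ℓ
    have e2 : (S.traj g x0 w (t+1)).2.2 (Fin.last t)
        = g t (S.traj g x0 w t).2.1 (S.traj g x0 w t).2.2 :=
      Fin.snoc_last (α := fun ℓ : Fin (t+1) => S.U ℓ.1) _ _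
    rw [e1, e2, olp_traj g x0 w t]
    rfl

lemma traj_u_eq (g : S.Strat) (x0 : S.X 0) (w : ∀ s, S.W s) (t : ℕ) (ℓ : Fin t) :
    (S.traj g x0 w t).2.2 ℓ
      = g ℓ.1 (S.traj g x0 w ℓ.1).2.1 (S.traj g x0 w ℓ.1).2.2 := by
  have h1 : ℓ.1 + 1 ≤ t := ℓ.2
  have e : (S.traj g x0 w t).2.2 ⟨ℓ.1, lt_of_lt_of_le (Nat.lt_succ_self ℓ.1) h1⟩
      = (S.traj g x0 w (ℓ.1+1)).2.2 ⟨ℓ.1, Nat.lt_succ_self ℓ.1⟩ :=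
    (traj_pref g x0 w t (ℓ.1+1) h1).1 ⟨ℓ.1, Nat.lt_succ_self ℓ.1⟩
  have e2 : (S.traj g x0 w (ℓ.1+1)).2.2 (Fin.last ℓ.1)
      = g ℓ.1 (S.traj g x0 w ℓ.1).2.1 (S.traj g x0 w ℓ.1).2.2 :=
    Fin.snoc_last (α := fun j : Fin (ℓ.1+1) => S.U j.1) _ _
  exact e.trans e2

lemma traj_z_eq (g : S.Strat) (x0 : S.X 0) (w : ∀ s, S.W s) (t : ℕ) (ℓ : Fin t) :
    (S.traj g x0 w t).2.1 ℓ
      = S.h ℓ.1 (S.traj g x0 w ℓ.1).1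
          (g ℓ.1 (S.traj g x0 w ℓ.1).2.1 (S.traj g x0 w ℓ.1).2.2) := by
  have h1 : ℓ.1 + 1 ≤ t := ℓ.2
  have e : (S.traj g x0 w t).2.1 ⟨ℓ.1, lt_of_lt_of_le (Nat.lt_succ_self ℓ.1) h1⟩
      = (S.traj g x0 w (ℓ.1+1)).2.1 ⟨ℓ.1, Nat.lt_succ_self ℓ.1⟩ :=
    (traj_pref g x0 w t (ℓ.1+1) h1).2 ⟨ℓ.1, Nat.lt_succ_self ℓ.1⟩
  have e2 : (S.traj g x0 w (ℓ.1+1)).2.1 (Fin.last ℓ.1)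
      = S.h ℓ.1 (S.traj g x0 w ℓ.1).1
          (g ℓ.1 (S.traj g x0 w ℓ.1).2.1 (S.traj g x0 w ℓ.1).2.2) :=
    Fin.snoc_last (α := fun j : Fin (ℓ.1+1) => S.Z (j.1+1)) _ _
  exact e.trans e2

lemma traj_trunc_u (g : S.Strat) (x0 : S.X 0) (w : ∀ s, S.W s) (t : ℕ) (ℓ : Fin t) :
    (fun j : Fin ℓ.1 => (S.traj g x0 w t).2.2 ⟨j.1, j.2.trans ℓ.2⟩)
      = (S.traj g x0 w ℓ.1).2.2 := by
  funext j
  exact (traj_pref g x0 w t ℓ.1 ℓ.2.le).1 j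

lemma traj_trunc_z (g : S.Strat) (x0 : S.X 0) (w : ∀ s, S.W s) (t : ℕ) (ℓ : Fin t) :
    (fun j : Fin ℓ.1 => (S.traj g x0 w t).2.1 ⟨j.1, j.2.trans ℓ.2⟩)
      = (S.traj g x0 w ℓ.1).2.1 := by
  funext j
  exact (traj_pref g x0 w t ℓ.1 ℓ.2.le).2 j

/-- The trajectory history is `g`-consistent. -/
lemma traj_selfcons (g : S.Strat) (x0 : S.X 0) (w : ∀ s, S.W s) (t : ℕ) (ℓ : Fin t) :
    (S.traj g x0 w t).2.2 ℓ
      = g ℓ.1 (fun j => (S.traj g x0 w t).2.1 ⟨j.1, j.2.trans ℓ.2⟩)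
          (fun j => (S.traj g x0 w t).2.2 ⟨j.1, j.2.trans ℓ.2⟩) := by
  rw [traj_trunc_u, traj_trunc_z]
  exact traj_u_eq g x0 w t ℓ

/-- The trajectory state belongs to the information state of its history. -/
lemma traj_mem_infoState (g : S.Strat) (x0 : S.X 0) (hx0 : x0 ∈ S.X0)
    (w : ∀ s, S.W s) (t : ℕ) :
    (S.traj g x0 w t).1 ∈ S.infoState t (S.traj g x0 w t).2.1 (S.traj g x0 w t).2.2 := by
  refine ⟨x0, hx0, w, fun ℓ => ?_, olp_traj g x0 w t⟩
  rw [traj_trunc_u, olp_traj, traj_u_eq]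
  exact (traj_z_eq g x0 w t ℓ).symm
lemma snoc_trunc_U (t : ℕ) (u : ∀ ℓ : Fin t, S.U ℓ.1) (ut : S.U t)
    (ℓ : Fin (t+1)) (hℓ : ℓ.1 ≤ t) :
    (fun j : Fin ℓ.1 => Fin.snoc (α := fun i : Fin (t+1) => S.U i.1) u ut
        ⟨j.1, j.2.trans ℓ.2⟩)
      = fun j : Fin ℓ.1 => u ⟨j.1, lt_of_lt_of_le j.2 hℓ⟩ := by
  funext j
  exact Fin.snoc_castSucc (α := fun i : Fin (t+1) => S.U i.1) _ _
    ⟨j.1, lt_of_lt_of_le j.2 hℓ⟩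

lemma infoState_succ (t : ℕ) (z : ∀ ℓ : Fin t, S.Z (ℓ.1+1)) (u : ∀ ℓ : Fin t, S.U ℓ.1)
    (ut : S.U t) (zt : S.Z (t+1)) :
    S.infoState (t+1) (Fin.snoc (α := fun ℓ : Fin (t+1) => S.Z (ℓ.1+1)) z zt)
      (Fin.snoc (α := fun ℓ : Fin (t+1) => S.U ℓ.1) u ut)
      = S.Ftil t (S.infoState t z u) ut zt := by
  ext x'
  constructor
  · rintro ⟨x0, hx0, w, hobs, holp⟩
    have hlast := hobs (Fin.last t)
    rw [snoc_trunc_U t u ut (Fin.last t) le_rfl] at hlast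
    rw [Fin.snoc_last, Fin.snoc_last] at hlast
    refine ⟨S.olp x0 w t u, ⟨x0, hx0, w, ?_, rfl⟩, hlast, w t, ?_⟩
    · intro ℓ
      have hc := hobs ℓ.castSucc
      rw [snoc_trunc_U t u ut ℓ.castSucc (Nat.lt_succ_iff.mp ℓ.castSucc.2)] at hc
      rw [Fin.snoc_castSucc, Fin.snoc_castSucc] at hc
      exact hc
    · rw [← holp, olp_succ]
      have e1 : (fun i : Fin t => Fin.snoc (α := fun i : Fin (t+1) => S.U i.1) u ut
          i.castSucc) = u := by
        funext i
        exact Fin.snoc_castSucc (α := fun i : Fin (t+1) => S.U i.1) _ _ i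
      rw [e1, Fin.snoc_last]
  · rintro ⟨x, ⟨x0, hx0, w0, hobs0, holp0⟩, hzt, w, hx'⟩
    classical
    set w' : ∀ s, S.W s := Function.update w0 t w with hw'
    have hwlt : ∀ s, s < t → w0 s = w' s := fun s hs =>
      (Function.update_of_ne (Nat.ne_of_lt hs) _ _).symm
    have hwt : w' t = w := Function.update_self _ _ _
    have holp' : S.olp x0 w' t u = x := by
      rw [← olp_congr x0 w0 w' t u hwlt, holp0]
    refine ⟨x0, hx0, w', ?_, ?_⟩
    · intro ℓ
      refine Fin.lastCases ?_ (fun j => ?_) ℓ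
      · have h2 : S.olp x0 w' t (fun j : Fin t => u ⟨j.1, lt_of_lt_of_le j.2 le_rfl⟩) = x :=
          holp'
        rw [snoc_trunc_U t u ut (Fin.last t) le_rfl, Fin.snoc_last, Fin.snoc_last]
        show S.h t (S.olp x0 w' t fun j => u ⟨j.1, lt_of_lt_of_le j.2 le_rfl⟩) ut = zt
        rw [h2]
        exact hzt
      · rw [snoc_trunc_U t u ut j.castSucc (Nat.lt_succ_iff.mp j.castSucc.2),
          Fin.snoc_castSucc, Fin.snoc_castSucc]
        have hc := hobs0 j
        rw [olp_congr x0 w0 w' j.1 _ (fun s hs => hwlt s (hs.trans_le (Nat.lt_succ_iff.mp j.castSucc.2)))] at hc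
        exact hc
    · rw [olp_succ]
      have e1 : (fun i : Fin t => Fin.snoc (α := fun i : Fin (t+1) => S.U i.1) u ut
          i.castSucc) = u := by
        funext i
        exact Fin.snoc_castSucc (α := fun i : Fin (t+1) => S.U i.1) _ _ i
      rw [e1, Fin.snoc_last, holp', hwt]
      exact hx'.symm
lemma set_finite1 {α : Type} [Finite α] (P : Set α) (f : α → ℝ) :
    {r | ∃ x ∈ P, r = f x}.Finite := by
  have : {r | ∃ x ∈ P, r = f x} = f '' P := by
    ext r; simp [eq_comm]
  rw [this]
  exact P.toFinite.image f

lemma set_finite2 {α : Type} [Finite α] (f : α → ℝ) :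
    {r | ∃ x : α, r = f x}.Finite := by
  have : {r | ∃ x : α, r = f x} = Set.range f := by
    ext r; simp [eq_comm]
  rw [this]
  exact Set.finite_range f

lemma V_top (P : Set (S.X S.T)) : S.V S.T P = sSup {r | ∃ x ∈ P, r = S.d x} := by
  rw [V]; simp

lemma V_lt {t : ℕ} (ht : t < S.T) (P : Set (S.X t)) :
    S.V t P = sInf {r | ∃ u : S.U t,
      r = sSup {s | ∃ z ∈ S.Zfeas t P u, s = S.V (t+1) (S.Ftil t P u z)}} := by
  rw [V]; simp [Nat.ne_of_lt ht, ht]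

lemma d_le_V_top [Finite (S.X S.T)] {P : Set (S.X S.T)} {x : S.X S.T} (hx : x ∈ P) :
    S.d x ≤ S.V S.T P := by
  rw [V_top]
  exact le_csSup (set_finite1 P S.d).bddAbove ⟨x, hx, rfl⟩

lemma V_le_sup [∀ s, Finite (S.U s)] {t : ℕ} (ht : t < S.T) (P : Set (S.X t)) (u : S.U t) :
    S.V t P ≤ sSup {s | ∃ z ∈ S.Zfeas t P u, s = S.V (t+1) (S.Ftil t P u z)} := by
  rw [V_lt ht]
  exact csInf_le (set_finite2 _).bddBelow ⟨u, rfl⟩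

lemma infoState_zero [∀ s, Nonempty (S.W s)] (z : ∀ ℓ : Fin 0, S.Z (ℓ.1+1))
    (u : ∀ ℓ : Fin 0, S.U ℓ.1) : S.infoState 0 z u = S.X0 := by
  ext x
  constructor
  · rintro ⟨x0, hx0, w, -, holp⟩
    exact holp ▸ hx0
  · intro hx
    exact ⟨x, hx, Classical.arbitrary _, fun ℓ => ℓ.elim0, rfl⟩
lemma J_bddAbove [Finite (S.X S.T)] (g : S.Strat) :
    BddAbove {r | ∃ x0 ∈ S.X0, ∃ w : ∀ t, S.W t, r = S.d (S.traj g x0 w S.T).1} := by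
  refine (Set.Finite.subset (Set.finite_range S.d) ?_).bddAbove
  rintro r ⟨x0, -, w, rfl⟩
  exact ⟨_, rfl⟩

lemma V_mono_along [∀ s, Finite (S.X s)] [∀ s, Finite (S.U s)] [∀ s, Finite (S.Z s)]
    (gstar : S.Strat)
    (hopt : ∀ x0 ∈ S.X0, ∀ (wseq : ∀ s, S.W s), ∀ t < S.T,
      sSup {s | ∃ z ∈ S.Zfeas t
            (S.infoState t (S.traj gstar x0 wseq t).2.1 (S.traj gstar x0 wseq t).2.2)
            (gstar t (S.traj gstar x0 wseq t).2.1 (S.traj gstar x0 wseq t).2.2),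
          s = S.V (t+1) (S.Ftil t
            (S.infoState t (S.traj gstar x0 wseq t).2.1 (S.traj gstar x0 wseq t).2.2)
            (gstar t (S.traj gstar x0 wseq t).2.1 (S.traj gstar x0 wseq t).2.2) z)} =
      sInf {r | ∃ u : S.U t,
        r = sSup {s | ∃ z ∈ S.Zfeas t
              (S.infoState t (S.traj gstar x0 wseq t).2.1 (S.traj gstar x0 wseq t).2.2) u,
            s = S.V (t+1) (S.Ftil t
              (S.infoState t (S.traj gstar x0 wseq t).2.1 (S.traj gstar x0 wseq t).2.2)
              u z)}})
    (x0 : S.X 0) (hx0 : x0 ∈ S.X0) (w : ∀ s, S.W s) (t : ℕ) (ht : t < S.T) :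
    S.V (t+1) (S.infoState (t+1) (S.traj gstar x0 w (t+1)).2.1
        (S.traj gstar x0 w (t+1)).2.2)
      ≤ S.V t (S.infoState t (S.traj gstar x0 w t).2.1 (S.traj gstar x0 w t).2.2) := by
  have hmem := traj_mem_infoState gstar x0 hx0 w t
  have e : S.infoState (t+1) (S.traj gstar x0 w (t+1)).2.1 (S.traj gstar x0 w (t+1)).2.2
      = S.Ftil t
          (S.infoState t (S.traj gstar x0 w t).2.1 (S.traj gstar x0 w t).2.2)
          (gstar t (S.traj gstar x0 w t).2.1 (S.traj gstar x0 w t).2.2)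
          (S.h t (S.traj gstar x0 w t).1
            (gstar t (S.traj gstar x0 w t).2.1 (S.traj gstar x0 w t).2.2)) := by
    show S.infoState (t+1)
        (Fin.snoc (α := fun ℓ : Fin (t+1) => S.Z (ℓ.1+1)) (S.traj gstar x0 w t).2.1 _)
        (Fin.snoc (α := fun ℓ : Fin (t+1) => S.U ℓ.1) (S.traj gstar x0 w t).2.2 _) = _
    rw [infoState_succ]
  rw [e]
  have hle : S.V (t+1)
      (S.Ftil t (S.infoState t (S.traj gstar x0 w t).2.1 (S.traj gstar x0 w t).2.2)
        (gstar t (S.traj gstar x0 w t).2.1 (S.traj gstar x0 w t).2.2)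
        (S.h t (S.traj gstar x0 w t).1
          (gstar t (S.traj gstar x0 w t).2.1 (S.traj gstar x0 w t).2.2)))
      ≤ sSup {s | ∃ z ∈ S.Zfeas t
            (S.infoState t (S.traj gstar x0 w t).2.1 (S.traj gstar x0 w t).2.2)
            (gstar t (S.traj gstar x0 w t).2.1 (S.traj gstar x0 w t).2.2),
          s = S.V (t+1) (S.Ftil t
            (S.infoState t (S.traj gstar x0 w t).2.1 (S.traj gstar x0 w t).2.2)
            (gstar t (S.traj gstar x0 w t).2.1 (S.traj gstar x0 w t).2.2) z)} := by
    refine le_csSup (set_finite1 _ _).bddAbove ?_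
    exact ⟨_, ⟨(S.traj gstar x0 w t).1, hmem, rfl⟩, rfl⟩
  refine hle.trans ?_
  rw [hopt x0 hx0 w t ht, V_lt ht]
lemma J_le_V [∀ s, Finite (S.X s)] [∀ s, Finite (S.U s)] [∀ s, Finite (S.Z s)]
    [∀ s, Nonempty (S.W s)]
    (hX0 : S.X0.Nonempty) (gstar : S.Strat)
    (hopt : ∀ x0 ∈ S.X0, ∀ (wseq : ∀ s, S.W s), ∀ t < S.T,
      sSup {s | ∃ z ∈ S.Zfeas t
            (S.infoState t (S.traj gstar x0 wseq t).2.1 (S.traj gstar x0 wseq t).2.2)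
            (gstar t (S.traj gstar x0 wseq t).2.1 (S.traj gstar x0 wseq t).2.2),
          s = S.V (t+1) (S.Ftil t
            (S.infoState t (S.traj gstar x0 wseq t).2.1 (S.traj gstar x0 wseq t).2.2)
            (gstar t (S.traj gstar x0 wseq t).2.1 (S.traj gstar x0 wseq t).2.2) z)} =
      sInf {r | ∃ u : S.U t,
        r = sSup {s | ∃ z ∈ S.Zfeas t
              (S.infoState t (S.traj gstar x0 wseq t).2.1 (S.traj gstar x0 wseq t).2.2) u,
            s = S.V (t+1) (S.Ftil t
              (S.infoState t (S.traj gstar x0 wseq t).2.1 (S.traj gstar x0 wseq t).2.2)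
              u z)}}) :
    S.J gstar ≤ S.V 0 S.X0 := by
  have chain : ∀ x0 ∈ S.X0, ∀ w : ∀ s, S.W s, ∀ t, t ≤ S.T →
      S.V t (S.infoState t (S.traj gstar x0 w t).2.1 (S.traj gstar x0 w t).2.2)
        ≤ S.V 0 S.X0 := by
    intro x0 hx0 w t
    induction t with
    | zero => intro _; rw [infoState_zero]
    | succ t IH =>
      intro ht
      exact (V_mono_along gstar hopt x0 hx0 w t ht).trans (IH (Nat.le_of_succ_le ht))
  have hne : {r | ∃ x0 ∈ S.X0, ∃ w : ∀ s, S.W s,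
      r = S.d (S.traj gstar x0 w S.T).1}.Nonempty := by
    obtain ⟨x0, hx0⟩ := hX0
    exact ⟨_, x0, hx0, Classical.arbitrary _, rfl⟩
  refine csSup_le hne ?_
  rintro r ⟨x0, hx0, w, rfl⟩
  exact (d_le_V_top (traj_mem_infoState gstar x0 hx0 w S.T)).trans
    (chain x0 hx0 w S.T le_rfl)

lemma V_le_J [∀ s, Finite (S.X s)] [∀ s, Finite (S.U s)] [∀ s, Finite (S.Z s)]
    [∀ s, Nonempty (S.W s)]
    (hX0 : S.X0.Nonempty) (g : S.Strat) : S.V 0 S.X0 ≤ S.J g := by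
  have main : ∀ t, t ≤ S.T → ∃ x0, x0 ∈ S.X0 ∧ ∃ w : ∀ s, S.W s,
      S.V 0 S.X0 ≤ S.V t (S.infoState t (S.traj g x0 w t).2.1 (S.traj g x0 w t).2.2) := by
    intro t
    induction t with
    | zero =>
      intro _
      obtain ⟨x0, hx0⟩ := hX0
      exact ⟨x0, hx0, Classical.arbitrary _, by rw [infoState_zero]⟩
    | succ t IH =>
      intro ht
      have htT : t < S.T := ht
      obtain ⟨x0, hx0, w, hV⟩ := IH htT.le
      have hmem := traj_mem_infoState g x0 hx0 w t
      have hfin := set_finite1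
        (S.Zfeas t (S.infoState t (S.traj g x0 w t).2.1 (S.traj g x0 w t).2.2)
          (g t (S.traj g x0 w t).2.1 (S.traj g x0 w t).2.2))
        (fun z => S.V (t+1) (S.Ftil t
          (S.infoState t (S.traj g x0 w t).2.1 (S.traj g x0 w t).2.2)
          (g t (S.traj g x0 w t).2.1 (S.traj g x0 w t).2.2) z))
      have hne : {s | ∃ z ∈ S.Zfeas t
            (S.infoState t (S.traj g x0 w t).2.1 (S.traj g x0 w t).2.2)
            (g t (S.traj g x0 w t).2.1 (S.traj g x0 w t).2.2),
          s = S.V (t+1) (S.Ftil t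
            (S.infoState t (S.traj g x0 w t).2.1 (S.traj g x0 w t).2.2)
            (g t (S.traj g x0 w t).2.1 (S.traj g x0 w t).2.2) z)}.Nonempty :=
        ⟨_, ⟨S.h t (S.traj g x0 w t).1
            (g t (S.traj g x0 w t).2.1 (S.traj g x0 w t).2.2),
          ⟨_, hmem, rfl⟩, rfl⟩⟩
      obtain ⟨z', ⟨x, hxP, hhx⟩, hz'eq⟩ := hne.csSup_mem hfin
      obtain ⟨x0', hx0', w1, hobs1, holp1⟩ := hxP
      obtain ⟨hz1, hu1, hx1⟩ :=
        traj_consistent g x0' w1 t _ _ (traj_selfcons g x0 w t) hobs1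
      refine ⟨x0', hx0', w1, ?_⟩
      have e : S.infoState (t+1) (S.traj g x0' w1 (t+1)).2.1 (S.traj g x0' w1 (t+1)).2.2
          = S.Ftil t (S.infoState t (S.traj g x0 w t).2.1 (S.traj g x0 w t).2.2)
              (g t (S.traj g x0 w t).2.1 (S.traj g x0 w t).2.2) z' := by
        show S.infoState (t+1)
            (Fin.snoc (α := fun ℓ : Fin (t+1) => S.Z (ℓ.1+1)) (S.traj g x0' w1 t).2.1
              (S.h t (S.traj g x0' w1 t).1
                (g t (S.traj g x0' w1 t).2.1 (S.traj g x0' w1 t).2.2)))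
            (Fin.snoc (α := fun ℓ : Fin (t+1) => S.U ℓ.1) (S.traj g x0' w1 t).2.2
              (g t (S.traj g x0' w1 t).2.1 (S.traj g x0' w1 t).2.2)) = _
        rw [hz1, hu1, hx1, holp1, hhx, infoState_succ]
      rw [e, ← hz'eq]
      exact hV.trans (V_le_sup htT _ _)
  obtain ⟨x0, hx0, w, hV⟩ := main S.T le_rfl
  have hmem := traj_mem_infoState g x0 hx0 w S.T
  have hfin := set_finite1
    (S.infoState S.T (S.traj g x0 w S.T).2.1 (S.traj g x0 w S.T).2.2) S.d
  have hne : {r | ∃ x ∈ S.infoState S.T (S.traj g x0 w S.T).2.1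
      (S.traj g x0 w S.T).2.2, r = S.d x}.Nonempty := ⟨_, _, hmem, rfl⟩
  rw [V_top] at hV
  obtain ⟨x, hxP, hdx⟩ := hne.csSup_mem hfin
  obtain ⟨x0', hx0', w1, hobs1, holp1⟩ := hxP
  obtain ⟨-, -, hx1⟩ :=
    traj_consistent g x0' w1 S.T _ _ (traj_selfcons g x0 w S.T) hobs1
  have h3 : S.V 0 S.X0 ≤ S.d (S.traj g x0' w1 S.T).1 := by
    rw [hx1, holp1, ← hdx]
    exact hV
  exact h3.trans (le_csSup (J_bddAbove g) ⟨x0', hx0', w1, rfl⟩)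
end Sys

/-- a strategy that, at every reachable history, selects an
action attaining the minimum in the dynamic program is optimal. -/
theorem stmt14 (S : Sys) (hT : 1 ≤ S.T)
    [∀ t, Finite (S.X t)] [∀ t, Nonempty (S.X t)]
    [∀ t, Finite (S.U t)] [∀ t, Nonempty (S.U t)]
    [∀ t, Finite (S.W t)] [∀ t, Nonempty (S.W t)]
    [∀ t, Finite (S.Z t)] [∀ t, Nonempty (S.Z t)]
    (hX0 : S.X0.Nonempty)
    (gstar : S.Strat)
    (hopt : ∀ x0 ∈ S.X0, ∀ (wseq : ∀ s, S.W s), ∀ t < S.T,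
      sSup {s | ∃ z ∈ S.Zfeas t
            (S.infoState t (S.traj gstar x0 wseq t).2.1 (S.traj gstar x0 wseq t).2.2)
            (gstar t (S.traj gstar x0 wseq t).2.1 (S.traj gstar x0 wseq t).2.2),
          s = S.V (t+1) (S.Ftil t
            (S.infoState t (S.traj gstar x0 wseq t).2.1 (S.traj gstar x0 wseq t).2.2)
            (gstar t (S.traj gstar x0 wseq t).2.1 (S.traj gstar x0 wseq t).2.2) z)} =
      sInf {r | ∃ u : S.U t,
        r = sSup {s | ∃ z ∈ S.Zfeas t
              (S.infoState t (S.traj gstar x0 wseq t).2.1 (S.traj gstar x0 wseq t).2.2) u,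
            s = S.V (t+1) (S.Ftil t
              (S.infoState t (S.traj gstar x0 wseq t).2.1 (S.traj gstar x0 wseq t).2.2)
              u z)}}) :
    S.J gstar = S.V 0 S.X0 ∧ S.J gstar = sInf {r | ∃ g : S.Strat, r = S.J g} := by
  have h1 : S.J gstar = S.V 0 S.X0 :=
    le_antisymm (Sys.J_le_V hX0 gstar hopt) (Sys.V_le_J hX0 gstar)
  refine ⟨h1, ?_⟩
  have hlow : ∀ g : S.Strat, S.V 0 S.X0 ≤ S.J g := fun g => Sys.V_le_J hX0 g
  have hbdd : BddBelow {r | ∃ g : S.Strat, r = S.J g} := by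
    refine ⟨S.V 0 S.X0, ?_⟩
    rintro r ⟨g, rfl⟩
    exact hlow g
  refine le_antisymm (le_csInf ⟨_, gstar, rfl⟩ ?_) (csInf_le hbdd ⟨gstar, rfl⟩)
  rintro r ⟨g, rfl⟩
  rw [h1]
  exact hlow g
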